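/- Let V be a finite-dimensional ℂ-vector space with two commuting endomorphisms σ and μ, where σ² = 0. If W ⊆ V is the generalized eigenspace of μ for some eigenvalue λ, then σ restricts to an endomorphism of W with σ|_W squared equal to zero; moreover if V is a free ℂ[X]/(X²)-module under the σ-action, then W is a free ℂ[X]/(X²)-module under the restricted action. -/
import Mathlib


open FiniteDimensional Module

/-- `V` is a free module over `ℂ[X]/(X²)` where `X` acts by `σ`. -/
def IsFreeModSq {V : Type*} [AddCommGroup V] [Module ℂ V] (σ : V →ₗ[ℂ] V) : Prop :=
  ∃ (n : ℕ) (e : V ≃ₗ[ℂ] (Fin n → ℂ × ℂ)),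
    ∀ v : V, e (σ v) = fun i => ((0 : ℂ), (e v i).1)

lemma ker_eq_range_of_isFreeModSq {V : Type*} [AddCommGroup V] [Module ℂ V]
    {σ : V →ₗ[ℂ] V} (h : IsFreeModSq σ) : LinearMap.ker σ = LinearMap.range σ := by
  obtain ⟨n, e, he⟩ := h
  ext w
  simp only [LinearMap.mem_ker, LinearMap.mem_range]
  constructor
  · intro hw
    refine ⟨e.symm (fun i => ((e w i).2, 0)), ?_⟩
    apply e.injective
    rw [he]
    have h0 := he w
    rw [hw, map_zero] at h0
    funext i
    have h1 : (0 : ℂ) = (e w i).1 := congrArg Prod.snd (congrFun h0 i)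
    simp only [LinearEquiv.apply_symm_apply]
    exact Prod.ext h1 rfl
  · rintro ⟨u, rfl⟩
    apply e.injective
    rw [he, map_zero]
    funext i
    rw [congrFun (he u) i]
    rfl

lemma isFreeModSq_of_ker_eq_range {V : Type*} [AddCommGroup V] [Module ℂ V]
    [FiniteDimensional ℂ V] (σ : V →ₗ[ℂ] V)
    (h : LinearMap.ker σ = LinearMap.range σ) : IsFreeModSq σ := by
  classical
  have hσσ : ∀ v : V, σ (σ v) = 0 := by
    intro v
    have h1 : σ v ∈ LinearMap.range σ := LinearMap.mem_range_self σ v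
    rw [← h] at h1
    exact h1
  set n : ℕ := Module.finrank ℂ (LinearMap.ker σ) with hn
  let b : Basis (Fin n) ℂ (LinearMap.ker σ) := Module.finBasis ℂ (LinearMap.ker σ)
  let φ : (LinearMap.ker σ) ≃ₗ[ℂ] (Fin n → ℂ) := b.equivFun
  let σk : V →ₗ[ℂ] (LinearMap.ker σ) := σ.codRestrict (LinearMap.ker σ) (fun v => hσσ v)
  obtain ⟨U, hU⟩ := Submodule.exists_isCompl (LinearMap.ker σ)
  let π : V →ₗ[ℂ] (LinearMap.ker σ) := (LinearMap.ker σ).linearProjOfIsCompl U hU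
  let L : V →ₗ[ℂ] (Fin n → ℂ × ℂ) :=
    LinearMap.pi fun i =>
      ((LinearMap.proj i) ∘ₗ (φ : (LinearMap.ker σ) →ₗ[ℂ] (Fin n → ℂ)) ∘ₗ σk).prod
        ((LinearMap.proj i) ∘ₗ (φ : (LinearMap.ker σ) →ₗ[ℂ] (Fin n → ℂ)) ∘ₗ π)
  have hLapp : ∀ v i, L v i = (φ (σk v) i, φ (π v) i) := fun v i => rfl
  have hLinj : Function.Injective L := by
    rw [← LinearMap.ker_eq_bot, LinearMap.ker_eq_bot']
    intro v hv
    have h1 : φ (σk v) = 0 := by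
      funext i
      exact congrArg Prod.fst (congrFun hv i)
    have h2 : φ (π v) = 0 := by
      funext i
      exact congrArg Prod.snd (congrFun hv i)
    have hσv : σ v = 0 := by
      have := φ.injective (h1.trans (map_zero φ).symm)
      exact congrArg Subtype.val this
    have hvK : v ∈ LinearMap.ker σ := hσv
    have h3 : π v = ⟨v, hvK⟩ :=
      (LinearMap.ker σ).linearProjOfIsCompl_apply_left hU ⟨v, hvK⟩
    have hπ : π v = 0 := φ.injective (h2.trans (map_zero φ).symm)
    rw [h3] at hπ
    exact congrArg Subtype.val hπ
  have hdim : Module.finrank ℂ V = Module.finrank ℂ (Fin n → ℂ × ℂ) := by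
    have h1 := LinearMap.finrank_range_add_finrank_ker σ
    have h2 : Module.finrank ℂ (LinearMap.range σ) = n := by rw [← h, hn]
    rw [h2] at h1
    simp only [Module.finrank_pi_fintype, Module.finrank_prod, Module.finrank_self,
      Finset.sum_const, Finset.card_univ, Fintype.card_fin, smul_eq_mul, ← h1]
    ring
  have hLbij : Function.Bijective L :=
    ⟨hLinj, (LinearMap.injective_iff_surjective_of_finrank_eq_finrank hdim).mp hLinj⟩
  refine ⟨n, LinearEquiv.ofBijective L hLbij, ?_⟩
  intro v
  funext i
  show L (σ v) i = ((0 : ℂ), (L v i).1)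
  rw [hLapp, hLapp]
  have h1 : σk (σ v) = 0 := Subtype.ext (hσσ v)
  have h2 : π (σ v) = σk v := by
    have hm : σ v ∈ LinearMap.ker σ := hσσ v
    exact (LinearMap.ker σ).linearProjOfIsCompl_apply_left hU ⟨σ v, hm⟩
  rw [h1, h2, map_zero]
  rfl

/-- For commuting endomorphisms `σ, μ` with `σ² = 0`, `σ` restricts to the
generalized `λ`-eigenspace `W` of `μ`, the restriction squares to zero, and if
`V` is free over `ℂ[X]/(X²)` under `σ`, then so is `W` under the restriction. -/
theorem isFreeModSq_restrict_maxGenEigenspace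
    (V : Type*) [AddCommGroup V] [Module ℂ V] [FiniteDimensional ℂ V]
    (σ μ : V →ₗ[ℂ] V) (hcomm : σ ∘ₗ μ = μ ∘ₗ σ) (hσ : σ ∘ₗ σ = 0) (lam : ℂ) :
    ∃ hmap : ∀ v ∈ Module.End.maxGenEigenspace (μ : Module.End ℂ V) lam,
        σ v ∈ Module.End.maxGenEigenspace (μ : Module.End ℂ V) lam,
      (σ.restrict hmap) ∘ₗ (σ.restrict hmap) = 0 ∧
      (IsFreeModSq σ → IsFreeModSq (σ.restrict hmap)) := by
  classical
  have hcomm' : Commute (μ : Module.End ℂ V) σ := by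
    show μ * σ = σ * μ
    exact (hcomm.symm : (μ : Module.End ℂ V) * σ = σ * μ)
  have hmap : ∀ v ∈ Module.End.maxGenEigenspace (μ : Module.End ℂ V) lam,
      σ v ∈ Module.End.maxGenEigenspace (μ : Module.End ℂ V) lam :=
    Module.End.mapsTo_maxGenEigenspace_of_comm hcomm' lam
  have hσσ : ∀ v : V, σ (σ v) = 0 := fun v =>
    congrFun (congrArg DFunLike.coe hσ) v
  refine ⟨hmap, ?_, ?_⟩
  · apply LinearMap.ext
    intro v
    exact Subtype.ext (hσσ (v : V))
  · intro hfree
    have hker : LinearMap.ker σ = LinearMap.range σ := ker_eq_range_of_isFreeModSq hfree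
    apply isFreeModSq_of_ker_eq_range
    set W : Submodule ℂ V := Module.End.maxGenEigenspace (μ : Module.End ℂ V) lam with hW
    set W' : Submodule ℂ V :=
      ⨆ χ ∈ {χ : ℂ | χ ≠ lam}, Module.End.maxGenEigenspace (μ : Module.End ℂ V) χ with hW'
    have hsup : W ⊔ W' = ⊤ := by
      rw [hW, hW', ← Module.End.iSup_maxGenEigenspace_eq_top (μ : Module.End ℂ V)]
      rw [← iSup_univ (f := fun χ : ℂ => Module.End.maxGenEigenspace (μ : Module.End ℂ V) χ)]
      rw [show (Set.univ : Set ℂ) = {lam} ∪ {χ : ℂ | χ ≠ lam} by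
        ext χ; simp [eq_comm, em]]
      rw [iSup_union]
      simp
    have hdisj : Disjoint W W' :=
      Module.End.independent_maxGenEigenspace (μ : Module.End ℂ V) lam
    have hkey : ∀ v ∈ W, σ v = 0 → ∃ w ∈ W, σ w = v := by
      intro v hv hv0
      have hvrange : v ∈ LinearMap.range σ := by rw [← hker]; exact hv0
      obtain ⟨u, hu⟩ := hvrange
      have hu' : u ∈ W ⊔ W' := by rw [hsup]; trivial
      obtain ⟨w, hw, w', hw', huw⟩ := Submodule.mem_sup.mp hu'
      have hσW' : σ w' ∈ W' := by
        have hle : W' ≤ Submodule.comap σ W' := by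
          refine iSup₂_le fun χ hχ => ?_
          intro y hy
          have hy' : σ y ∈ Module.End.maxGenEigenspace (μ : Module.End ℂ V) χ :=
            Module.End.mapsTo_maxGenEigenspace_of_comm hcomm' χ hy
          exact Submodule.mem_comap.mpr
            ((le_biSup (fun χ => Module.End.maxGenEigenspace (μ : Module.End ℂ V) χ) hχ) hy')
        exact hle hw'
      have hσw : σ w ∈ W := hmap w hw
      have heq : σ w' = v - σ w := by
        rw [← hu, ← huw, map_add]; abel
      have hmem : σ w' ∈ W := by
        rw [heq]; exact sub_mem hv hσw
      have hzero : σ w' = 0 := by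
        have := hdisj.le_bot ⟨hmem, hσW'⟩
        simpa using this
      refine ⟨w, hw, ?_⟩
      have h2 : v - σ w = 0 := by rw [← heq]; exact hzero
      exact (sub_eq_zero.mp h2).symm
    ext x
    simp only [LinearMap.mem_ker, LinearMap.mem_range]
    constructor
    · intro hx
      have hx' : σ (x : V) = 0 := congrArg Subtype.val hx
      obtain ⟨w, hw, hww⟩ := hkey (x : V) x.2 hx'
      exact ⟨⟨w, hw⟩, Subtype.ext hww⟩
    · rintro ⟨y, rfl⟩
      exact Subtype.ext (hσσ (y : V))
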